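/- For X' = m·[[1, 2r],[0, -1]] with m > 0, and J_{X'} = T_{-r}·J·T_r where J = [[0,1],[-1,0]] and T_r = [[1,r],[0,1]], the identity R(X', z) = 2m²/(Im(z)·Im(J_{X'}·z)) holds for all z in the upper half plane, where R(X',z) = ½(X', X(z))² - (X',X'). -/
import Mathlib


open Matrix Complex

noncomputable def Xmat (x y : ℝ) : Matrix (Fin 2) (Fin 2) ℝ :=
  (1 / y) • !![-x, x ^ 2 + y ^ 2; -1, x]

noncomputable def Rfun (X : Matrix (Fin 2) (Fin 2) ℝ) (x y : ℝ) : ℝ :=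
  (1 / 2) * (-Matrix.trace (X * Xmat x y)) ^ 2 - (-Matrix.trace (X * X))

/-- `J_{X'} = T_{-r} J T_r = [[r, 1 + r²],[-1, -r]]`, acting on `z` by Möbius
transformations as `(r z + 1 + r²)/(-z - r)`. -/
theorem R_product_of_imaginary_parts (m r x y : ℝ) (hm : 0 < m) (hy : 0 < y) :
    Rfun (m • !![(1:ℝ), 2 * r; 0, -1]) x y =
      2 * m ^ 2 / (y * ((r * (x + y * Complex.I) + 1 + r ^ 2) /
        (-(x + y * Complex.I) - r)).im) := by
  have hden : ((x:ℝ) + r) ^ 2 + y ^ 2 ≠ 0 := by positivity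
  have him : ((r * (x + y * Complex.I) + 1 + r ^ 2) /
      (-(x + y * Complex.I) - r)).im = y / ((x + r) ^ 2 + y ^ 2) := by
    rw [Complex.div_im]
    simp [Complex.normSq_apply, pow_two]
    rw [div_sub_div_same, div_eq_div_iff (by nlinarith) (by nlinarith)]
    ring
  rw [him]
  simp only [Rfun, Xmat, Matrix.trace_fin_two, Matrix.smul_mul, Matrix.mul_smul,
    Matrix.smul_apply]
  norm_num [Matrix.mul_apply, Fin.sum_univ_two]
  field_simp
  ring
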